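/- Let A, η ∈ C²(ℝ) be strictly convex with entropy flux q, q' = η'A'. If u_L > u_R > u, then η(u|u_R) - η(u|u_L) < 0 and (q(u;u_R) - q(u;u_L))/(η(u|u_R) - η(u|u_L)) > A'(u). -/

import Mathlib

/-!
Write `η(u|v)` for the relative entropy and `q(u;v)` for the relative entropy flux. For fixed
`u`, the map `v ↦ η(u|v)` is strictly increasing on `[u, ∞)` by convexity of `η`, which gives the
sign of the denominator. For the numerator, `G v := q(u;v) - A'(u) η(u|v)` has derivative
`η''(v) A(v|u)`, and `A(·|u)` is increasing on `[u, ∞)`; hence on `[u_R, u_L]` the function `G`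
grows at least like `A(u_R|u) η'`, so `G(u_L) - G(u_R) ≥ A(u_R|u) (η'(u_L) - η'(u_R)) > 0`.
-/

open Set

noncomputable def relEntropy (η : ℝ → ℝ) (u v : ℝ) : ℝ := η u - η v - deriv η v * (u - v)

noncomputable def relEntropyFlux (η q A : ℝ → ℝ) (u v : ℝ) : ℝ := q u - q v - deriv η v * (A u - A v)

section Convex

variable {f : ℝ → ℝ}

theorem StrictConvexOn.relEntropy_pos (hf : StrictConvexOn ℝ univ f) {u v : ℝ}
    (hd : DifferentiableAt ℝ f v) (huv : u ≠ v) : 0 < relEntropy f u v := by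
  unfold relEntropy
  rcases huv.lt_or_gt with huv | huv
  · have h := hf.slope_lt_deriv (mem_univ u) (mem_univ v) huv hd
    rw [slope_def_field, div_lt_iff₀ (sub_pos.2 huv)] at h
    linarith
  · have h := hf.deriv_lt_slope (mem_univ v) (mem_univ u) huv hd
    rw [slope_def_field, lt_div_iff₀ (sub_pos.2 huv)] at h
    linarith

theorem ConvexOn.monotoneOn_relEntropy_left (hf : ConvexOn ℝ univ f) (hd : Differentiable ℝ f)
    (v : ℝ) : MonotoneOn (fun u ↦ relEntropy f u v) (Ici v) := by
  intro w hw w' _ hww'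
  rcases hww'.eq_or_lt with rfl | hlt
  · rfl
  have hslope := hf.deriv_le_slope (mem_univ w) (mem_univ w') hlt (hd w)
  rw [slope_def_field, le_div_iff₀ (sub_pos.2 hlt)] at hslope
  have hderiv : deriv f v ≤ deriv f w :=
    hf.monotoneOn_deriv (fun x _ ↦ hd x) (mem_univ v) (mem_univ w) hw
  simp only [relEntropy]
  nlinarith

theorem StrictConvexOn.strictMonoOn_relEntropy_right (hf : StrictConvexOn ℝ univ f)
    (hd : Differentiable ℝ f) (u : ℝ) : StrictMonoOn (relEntropy f u) (Ici u) := by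
  intro v hv w _ hvw
  have hslope := hf.slope_lt_deriv (mem_univ v) (mem_univ w) hvw (hd w)
  rw [slope_def_field, div_lt_iff₀ (sub_pos.2 hvw)] at hslope
  have hderiv : deriv f v < deriv f w :=
    hf.strictMonoOn_deriv (fun x _ ↦ hd x) (mem_univ v) (mem_univ w) hvw
  have hv : u ≤ v := hv
  simp only [relEntropy]
  nlinarith

end Convex

section Flux

variable {η q A : ℝ → ℝ}

theorem hasDerivAt_relEntropy_right {u x : ℝ} (hη : DifferentiableAt ℝ η x)
    (hη' : DifferentiableAt ℝ (deriv η) x) :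
    HasDerivAt (relEntropy η u) (deriv (deriv η) x * (x - u)) x := by
  have h := ((hasDerivAt_const x (η u)).sub hη.hasDerivAt).sub
    (hη'.hasDerivAt.mul ((hasDerivAt_const x u).sub (hasDerivAt_id x)))
  exact h.congr_deriv (by simp only [Pi.sub_apply, id]; ring)

theorem hasDerivAt_relEntropyFlux_right {u x : ℝ}
    (hq : HasDerivAt q (deriv η x * deriv A x) x) (hη' : DifferentiableAt ℝ (deriv η) x)
    (hA : DifferentiableAt ℝ A x) :
    HasDerivAt (relEntropyFlux η q A u) (deriv (deriv η) x * (A x - A u)) x := by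
  have h := ((hasDerivAt_const x (q u)).sub hq).sub
    (hη'.hasDerivAt.mul ((hasDerivAt_const x (A u)).sub hA.hasDerivAt))
  exact h.congr_deriv (by simp only [Pi.sub_apply]; ring)

theorem relEntropyFlux_sub_lt_mul_relEntropy_sub (hAc : StrictConvexOn ℝ univ A)
    (hA : Differentiable ℝ A) (hηc : StrictConvexOn ℝ univ η) (hη : Differentiable ℝ η)
    (hη' : Differentiable ℝ (deriv η)) (hq : ∀ x, HasDerivAt q (deriv η x * deriv A x) x)
    {u v w : ℝ} (huv : u < v) (hvw : v < w) :
    relEntropyFlux η q A u v - relEntropyFlux η q A u w <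
      deriv A u * (relEntropy η u v - relEntropy η u w) := by
  set G := fun x ↦ relEntropyFlux η q A u x - deriv A u * relEntropy η u x
  set k := relEntropy A v u
  have hG : ∀ x, HasDerivAt (fun x ↦ G x - k * deriv η x)
      (deriv (deriv η) x * (relEntropy A x u - k)) x := fun x ↦ by
    have h := ((hasDerivAt_relEntropyFlux_right (u := u) (hq x) (hη' x) (hA x)).sub
      ((hasDerivAt_relEntropy_right (u := u) (hη x) (hη' x)).const_mul (deriv A u))).sub
      ((hη' x).hasDerivAt.const_mul k)
    exact h.congr_deriv (by simp only [relEntropy]; ring)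
  have hη'' : ∀ x, 0 ≤ deriv (deriv η) x := fun x ↦
    (monotoneOn_univ.1 (hηc.strictMonoOn_deriv fun x _ ↦ hη x).monotoneOn).deriv_nonneg
  have hmono : MonotoneOn (fun x ↦ G x - k * deriv η x) (Ici v) := by
    refine monotoneOn_of_hasDerivWithinAt_nonneg (convex_Ici v)
      (fun x _ ↦ (hG x).continuousAt.continuousWithinAt) (fun x _ ↦ (hG x).hasDerivWithinAt)
      fun x hx ↦ mul_nonneg (hη'' x) (sub_nonneg.2 ?_)
    rw [interior_Ici] at hx
    exact hAc.convexOn.monotoneOn_relEntropy_left hA u (mem_Ici.2 huv.le)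
      (mem_Ici.2 (huv.trans hx).le) (le_of_lt hx)
  have hgrowth : k * (deriv η w - deriv η v) ≤ G w - G v := by
    have h := hmono (mem_Ici.2 le_rfl) (mem_Ici.2 hvw.le) hvw.le
    dsimp only at h
    linarith
  have hk : 0 < k := hAc.relEntropy_pos (hA u) huv.ne'
  have hη'vw : deriv η v < deriv η w :=
    hηc.strictMonoOn_deriv (fun x _ ↦ hη x) (mem_univ v) (mem_univ w) hvw
  have hGpos : 0 < G w - G v := (mul_pos hk (sub_pos.2 hη'vw)).trans_le hgrowth
  simp only [G] at hGpos
  linarith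

end Flux

theorem stmt_10 (A η q : ℝ → ℝ)
    (hA : ContDiff ℝ 2 A) (hAc : StrictConvexOn ℝ Set.univ A)
    (hη : ContDiff ℝ 2 η) (hηc : StrictConvexOn ℝ Set.univ η)
    (hqd : Differentiable ℝ q)
    (hq : ∀ u, deriv q u = deriv η u * deriv A u)
    (u uL uR : ℝ) (h1 : u < uR) (h2 : uR < uL) :
    (η u - η uR - deriv η uR * (u - uR)) - (η u - η uL - deriv η uL * (u - uL)) < 0 ∧
      deriv A u <
        ((q u - q uR - deriv η uR * (A u - A uR)) -
            (q u - q uL - deriv η uL * (A u - A uL))) /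
          ((η u - η uR - deriv η uR * (u - uR)) -
            (η u - η uL - deriv η uL * (u - uL))) := by
  have hηd : Differentiable ℝ η := hη.differentiable two_ne_zero
  have hentropy : relEntropy η u uR - relEntropy η u uL < 0 :=
    sub_neg.2 <| hηc.strictMonoOn_relEntropy_right hηd u (mem_Ici.2 h1.le)
      (mem_Ici.2 (h1.trans h2).le) h2
  have hflux := relEntropyFlux_sub_lt_mul_relEntropy_sub hAc (hA.differentiable two_ne_zero)
    hηc hηd hη.differentiable_deriv_two (fun x ↦ hq x ▸ (hqd x).hasDerivAt) h1 h2
  exact ⟨hentropy, (lt_div_iff_of_neg hentropy).2 hflux⟩
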